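/- Let γ > 1, R⁻ > 0, C₀ > 0 and s ∈ (0, κ(γ)·c_s(R⁻)). Then there exist ε₀ > 0 and a constant C₃ > 0 (independent of ε) such that for every ε ∈ (0, ε₀) and every function R satisfying the profile hypotheses (H_ε), the function ω(x) = (s/2)(1/f₁)'(x) − g(x)/f₁(x) satisfies ω(x) ≥ C₃|R'(x)| for all x ∈ ℝ. -/

import Mathlib

open Real Filter

/-- The enthalpy for `γ > 1`: `h(ρ) = γ/(γ-1)·ρ^(γ-1)`. -/
noncomputable def enth (γ ρ : ℝ) : ℝ := γ / (γ - 1) * ρ ^ (γ - 1)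

/-- The sound speed `c_s(ρ) = √(γ ρ^(γ-1))`. -/
noncomputable def soundSpeed (γ ρ : ℝ) : ℝ := Real.sqrt (γ * ρ ^ (γ - 1))

/-- The mass flux `A(ε)` of a shock of amplitude `ε` with left state `Rm`. -/
noncomputable def Aflux (γ Rm ε : ℝ) : ℝ :=
  ((Rm - ε) * Rm / Real.sqrt (2 * Rm - ε)) *
    Real.sqrt (2 * (enth γ Rm - enth γ (Rm - ε)) / ε)

/-- The profile hypotheses (H_ε): `R` is `C²`, takes values in `[R⁻ - ε, R⁻]`, is strictly
decreasing with `R' < 0`, and satisfies `|R'| ≤ C₀ε²`, `|R''| ≤ C₀ε|R'|`. -/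
def Hprof (C₀ ε Rm : ℝ) (R : ℝ → ℝ) : Prop :=
  ContDiff ℝ 2 R ∧
  (∀ x : ℝ, Rm - ε ≤ R x ∧ R x ≤ Rm ∧ deriv R x < 0) ∧
  (∀ x : ℝ, |deriv R x| ≤ C₀ * ε ^ 2 ∧ |deriv (deriv R) x| ≤ C₀ * ε * |deriv R x|)

/-- The threshold constant `κ(γ)` for the admissible shock speeds. -/
noncomputable def kappa (γ : ℝ) : ℝ :=
  if γ ≤ 3 then (5 - Real.sqrt (7 - 2 * γ)) / 2 else 2

/-!
With `c = c_s(R⁻)`, one computes `ω = |R'| · Φ(A(ε), R)` for an explicit rational-power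
expression `Φ(a, r)`. As `ε → 0`, `A(ε) → R⁻ c` and `R ∈ [R⁻ - ε, R⁻]`, so `(A(ε), R(x))`
approaches the sonic point `(R⁻ c, R⁻)`, where `f₁ = s (2c - s)` and
`Φ = s Q(s) / (R⁻ f₁²)` with `Q(s) = s² - 5cs + (γ + 9)c²/2`. For `γ ≤ 3` the smaller root of
`Q` is `κ(γ) c`, and for `γ > 3` one has `Q(s) > (2c - s)(3c - s)`; hence `s < κ(γ) c ≤ 2c`
makes `f₁` and `Φ` positive there, and by continuity `Φ` stays above half its sonic value.
-/

open Topology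

lemma soundSpeed_sq {γ ρ : ℝ} (hγ : 0 ≤ γ) (hρ : 0 ≤ ρ) :
    soundSpeed γ ρ ^ 2 = γ * ρ ^ (γ - 1) :=
  Real.sq_sqrt (by positivity)

lemma soundSpeed_pos {γ ρ : ℝ} (hγ : 0 < γ) (hρ : 0 < ρ) : 0 < soundSpeed γ ρ :=
  Real.sqrt_pos.2 (by positivity)

lemma hasDerivAt_enth {γ ρ : ℝ} (hγ : 1 < γ) (hρ : 0 < ρ) :
    HasDerivAt (enth γ) (soundSpeed γ ρ ^ 2 / ρ) ρ := by
  refine ((hasDerivAt_rpow_const (p := γ - 1) (Or.inl hρ.ne')).const_mul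
    (γ / (γ - 1))).congr_deriv ?_
  rw [soundSpeed_sq (by linarith) hρ.le, rpow_sub_one hρ.ne']
  have : γ - 1 ≠ 0 := by linarith
  field_simp

lemma tendsto_Aflux {γ Rm : ℝ} (hγ : 1 < γ) (hRm : 0 < Rm) :
    Tendsto (Aflux γ Rm) (𝓝[>] 0) (𝓝 (Rm * soundSpeed γ Rm)) := by
  set c := soundSpeed γ Rm
  have hslope : Tendsto (fun ε => 2 * (enth γ Rm - enth γ (Rm - ε)) / ε) (𝓝[>] 0)
      (𝓝 (2 * (c ^ 2 / Rm))) := by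
    have h := ((hasDerivAt_enth hγ (by simpa using hRm)).comp_const_sub Rm 0)
      |>.tendsto_slope_zero_right.const_mul (-2)
    simp only [zero_add, sub_zero, smul_eq_mul] at h
    convert h using 2 with ε
    · field_simp
      ring
    · ring
  have hfront : Tendsto (fun ε => (Rm - ε) * Rm / √(2 * Rm - ε)) (𝓝[>] 0)
      (𝓝 ((Rm - 0) * Rm / √(2 * Rm - 0))) :=
    ((continuous_const.sub continuous_id).mul continuous_const).continuousAt.div
      ((continuous_const.sub continuous_id).sqrt.continuousAt) (by simp; positivity)
      |>.tendsto.mono_left nhdsWithin_le_nhds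
  have hc : 0 < c := soundSpeed_pos (by linarith) hRm
  have hsqrt : √(2 * (c ^ 2 / Rm)) = √(2 * Rm) * c / Rm := by
    rw [sqrt_eq_iff_mul_self_eq_of_pos (by positivity)]
    field_simp
    rw [sq_sqrt (by positivity)]
  have : √(2 * Rm) ≠ 0 := by positivity
  have hlim : (Rm - 0) * Rm / √(2 * Rm - 0) * √(2 * (c ^ 2 / Rm)) = Rm * c := by
    rw [hsqrt, sub_zero, sub_zero]
    field_simp
  rw [← hlim]
  exact hfront.mul hslope.sqrt

lemma kappa_le_two (γ : ℝ) : kappa γ ≤ 2 := by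
  unfold kappa
  split_ifs with h
  · linarith [Real.one_le_sqrt.2 (by linarith : (1 : ℝ) ≤ 7 - 2 * γ)]
  · rfl

lemma quadratic_pos_of_lt_kappa_mul {γ c s : ℝ} (hc : 0 < c) (hs : s < kappa γ * c) :
    0 < s ^ 2 - 5 * c * s + (γ + 9) / 2 * c ^ 2 := by
  unfold kappa at hs
  split_ifs at hs with hγ
  · set d := √(7 - 2 * γ)
    have hd : d ^ 2 = 7 - 2 * γ := sq_sqrt (by linarith)
    have hd0 : 0 ≤ d := sqrt_nonneg _
    have hlt : s < (5 + d) / 2 * c := by nlinarith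
    calc (0 : ℝ) < ((5 - d) / 2 * c - s) * ((5 + d) / 2 * c - s) := by nlinarith
      _ = _ := by rw [show (γ + 9) / 2 = (25 - d ^ 2) / 4 by rw [hd]; ring]; ring
  · nlinarith [mul_pos (by linarith : 0 < 2 * c - s) (by linarith : 0 < 3 * c - s)]

/- `f1 γ s a r` is `f₁` with `A(ε) = a` and `R(x) = r`, `df1` is its `r`-derivative, and
`omegaCoeff` is `ω / |R'|`. -/
noncomputable def f1 (γ s a r : ℝ) : ℝ := γ * r ^ (γ - 1) - (s - a / r) ^ 2

noncomputable def df1 (γ s a r : ℝ) : ℝ :=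
  γ * (γ - 1) * r ^ (γ - 2) - 2 * (s - a / r) * (a / r ^ 2)

noncomputable def omegaCoeff (γ s a r : ℝ) : ℝ :=
  s / 2 * df1 γ s a r / f1 γ s a r ^ 2 + (2 * a - s * r) / (r ^ 2 * f1 γ s a r)

lemma hasDerivAt_f1_comp {γ s a R' x : ℝ} {R : ℝ → ℝ} (hR : HasDerivAt R R' x) (hRx : R x ≠ 0) :
    HasDerivAt (fun y => f1 γ s a (R y)) (df1 γ s a (R x) * R') x := by
  have h := ((hR.rpow_const (p := γ - 1) (Or.inl hRx)).const_mul γ).fun_sub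
    (((hasDerivAt_const x s).fun_sub ((hasDerivAt_const x a).fun_div hR hRx)).fun_pow 2)
  refine h.congr_deriv ?_
  rw [df1, sub_sub, one_add_one_eq_two]
  norm_num
  field_simp
  ring

lemma omega_eq_neg_mul_omegaCoeff {γ s a x : ℝ} {R : ℝ → ℝ} (hR : DifferentiableAt ℝ R x)
    (hRx : R x ≠ 0) (hf : f1 γ s a (R x) ≠ 0) :
    s / 2 * deriv (fun y => 1 / f1 γ s a (R y)) x
        - (2 * a - s * R x) * deriv R x / R x ^ 2 / f1 γ s a (R x)
      = -deriv R x * omegaCoeff γ s a (R x) := by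
  have hinv : HasDerivAt (fun y => (f1 γ s a (R y))⁻¹) _ x :=
    (hasDerivAt_f1_comp hR.hasDerivAt hRx).inv hf
  simp only [one_div]
  rw [hinv.deriv, omegaCoeff]
  field_simp
  ring

lemma continuousAt_f1 {γ s : ℝ} {z : ℝ × ℝ} (hz : z.2 ≠ 0) :
    ContinuousAt (fun p : ℝ × ℝ => f1 γ s p.1 p.2) z := by
  unfold f1
  fun_prop (disch := simp [hz])

lemma continuousAt_omegaCoeff {γ s : ℝ} {z : ℝ × ℝ} (hz : z.2 ≠ 0) (hf : f1 γ s z.1 z.2 ≠ 0) :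
    ContinuousAt (fun p : ℝ × ℝ => omegaCoeff γ s p.1 p.2) z := by
  have := continuousAt_f1 (γ := γ) (s := s) hz
  unfold omegaCoeff df1
  fun_prop (disch := simp [hz, hf])

section Sonic

variable {γ s c Rm : ℝ}

lemma f1_sonic (hRm : Rm ≠ 0) (hc : c ^ 2 = γ * Rm ^ (γ - 1)) :
    f1 γ s (Rm * c) Rm = s * (2 * c - s) := by
  rw [f1, ← hc, mul_div_cancel_left₀ c hRm]
  ring

lemma omegaCoeff_sonic (hRm : Rm ≠ 0) (hc : c ^ 2 = γ * Rm ^ (γ - 1)) :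
    omegaCoeff γ s (Rm * c) Rm
      = s * (s ^ 2 - 5 * c * s + (γ + 9) / 2 * c ^ 2) / (Rm * (s * (2 * c - s)) ^ 2) := by
  have hpow : γ * Rm ^ (γ - 2) = c ^ 2 / Rm := by
    rw [hc, show γ - 1 = γ - 2 + 1 by ring, rpow_add_one hRm]
    field_simp
  rw [omegaCoeff, f1_sonic hRm hc, df1, mul_assoc γ, mul_comm (γ - 1), ← mul_assoc, hpow,
    mul_div_cancel_left₀ c hRm]
  field_simp
  ring

end Sonic

lemma exists_forall_Icc_of_eventually_nhds {A : ℝ → ℝ} {a₀ r₀ : ℝ} {P : ℝ × ℝ → Prop}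
    (hA : Tendsto A (𝓝[>] 0) (𝓝 a₀)) (hP : ∀ᶠ p in 𝓝 (a₀, r₀), P p) :
    ∃ ε₀ > 0, ∀ ε, 0 < ε → ε < ε₀ → ∀ r, r₀ - ε ≤ r → r ≤ r₀ → P (A ε, r) := by
  rw [nhds_prod_eq] at hP
  obtain ⟨pa, hpa, pr, hpr, hP⟩ := eventually_prod_iff.1 hP
  obtain ⟨δ, hδ, hball⟩ := Metric.eventually_nhds_iff.1 hpr
  have hsmall : ∀ᶠ ε in 𝓝[>] (0 : ℝ), pa (A ε) ∧ ε < δ :=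
    (hA.eventually hpa).and (nhdsWithin_le_nhds (eventually_lt_nhds hδ))
  obtain ⟨ε₀, hε₀, hsub⟩ := mem_nhdsGT_iff_exists_Ioo_subset.1 hsmall
  refine ⟨ε₀, hε₀, fun ε hε hεε₀ r hlo hhi => ?_⟩
  obtain ⟨ha, hεδ⟩ := hsub ⟨hε, hεε₀⟩
  refine hP ha (hball ?_)
  rw [Real.dist_eq, abs_of_nonpos (by linarith)]
  linarith

theorem stmt4_general (γ Rm C₀ s : ℝ) (hγ : 1 < γ) (hRm : 0 < Rm)
    (hs : 0 < s) (hs2 : s < kappa γ * soundSpeed γ Rm) :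
    ∃ ε₀ > (0:ℝ), ∃ C₃ > (0:ℝ), ∀ ε : ℝ, 0 < ε → ε < ε₀ →
      ∀ R : ℝ → ℝ, Hprof C₀ ε Rm R →
        let f₁ : ℝ → ℝ := fun x => γ * R x ^ (γ - 1) - (s - Aflux γ Rm ε / R x) ^ 2
        let g : ℝ → ℝ := fun x => (2 * Aflux γ Rm ε - s * R x) * deriv R x / (R x) ^ 2
        let ω : ℝ → ℝ := fun x => (s / 2) * deriv (fun y => 1 / f₁ y) x - g x / f₁ x
        ∀ x : ℝ, ω x ≥ C₃ * |deriv R x| := by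
  set c := soundSpeed γ Rm
  have hc : 0 < c := soundSpeed_pos (by linarith) hRm
  have hc2 : c ^ 2 = γ * Rm ^ (γ - 1) := soundSpeed_sq (by linarith) hRm.le
  have hs2c : s < 2 * c := hs2.trans_le (mul_le_mul_of_nonneg_right (kappa_le_two γ) hc.le)
  have hf : 0 < s * (2 * c - s) := mul_pos hs (by linarith)
  have hΦ₀ : 0 < omegaCoeff γ s (Rm * c) Rm := by
    rw [omegaCoeff_sonic hRm.ne' hc2]
    exact div_pos (mul_pos hs (quadratic_pos_of_lt_kappa_mul hc hs2)) (mul_pos hRm (pow_pos hf 2))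
  set Φ₀ := omegaCoeff γ s (Rm * c) Rm
  have hf₀ : 0 < f1 γ s (Rm * c) Rm := f1_sonic hRm.ne' hc2 ▸ hf
  have hnear : ∀ᶠ p in 𝓝 (Rm * c, Rm),
      0 < p.2 ∧ 0 < f1 γ s p.1 p.2 ∧ Φ₀ / 2 < omegaCoeff γ s p.1 p.2 :=
    (continuousAt_snd.eventually (eventually_gt_nhds hRm)).and <|
      ((continuousAt_f1 hRm.ne').eventually (eventually_gt_nhds hf₀)).and <|
      (continuousAt_omegaCoeff hRm.ne' hf₀.ne').eventually (eventually_gt_nhds (half_lt_self hΦ₀))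
  obtain ⟨ε₀, hε₀, hε⟩ := exists_forall_Icc_of_eventually_nhds (tendsto_Aflux hγ hRm) hnear
  refine ⟨ε₀, hε₀, Φ₀ / 2, half_pos hΦ₀, fun ε hε0 hεε₀ R ⟨hRsmooth, hRbounds, _⟩ x => ?_⟩
  obtain ⟨hlo, hhi, hR'⟩ := hRbounds x
  obtain ⟨hRx, hfx, hΦx⟩ := hε ε hε0 hεε₀ (R x) hlo hhi
  refine ge_trans
    (omega_eq_neg_mul_omegaCoeff (hRsmooth.differentiable two_ne_zero x) hRx.ne' hfx.ne').ge ?_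
  rw [abs_of_neg hR', mul_comm]
  exact mul_le_mul_of_nonneg_left hΦx.le (neg_nonneg.2 hR'.le)

/-- Positivity of the dispersive coefficient `ω` (Lemma 3.4). -/
theorem stmt4 (γ Rm C₀ s : ℝ) (hγ : 1 < γ) (hRm : 0 < Rm) (hC₀ : 0 < C₀)
    (hs : 0 < s) (hs2 : s < kappa γ * soundSpeed γ Rm) :
    ∃ ε₀ > (0:ℝ), ∃ C₃ > (0:ℝ), ∀ ε : ℝ, 0 < ε → ε < ε₀ →
      ∀ R : ℝ → ℝ, Hprof C₀ ε Rm R →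
        let f₁ : ℝ → ℝ := fun x => γ * R x ^ (γ - 1) - (s - Aflux γ Rm ε / R x) ^ 2
        let g : ℝ → ℝ := fun x => (2 * Aflux γ Rm ε - s * R x) * deriv R x / (R x) ^ 2
        let ω : ℝ → ℝ := fun x => (s / 2) * deriv (fun y => 1 / f₁ y) x - g x / f₁ x
        ∀ x : ℝ, ω x ≥ C₃ * |deriv R x| :=
  stmt4_general γ Rm C₀ s hγ hRm hs hs2
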